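/- Let g, ḡ : [0,T] × {0,1} → ℝ be continuously differentiable functions solving, for every i ∈ {0,1}, j = 1−i, t ∈ [0,T]: g'(t,i) + (β(t,i) − ρ_i + λ_{ii})·g(t,i) + (1−γ)·g(t,i)^{γ/(γ−1)} + λ_{ij}·ḡ(t,j) = 0 and ḡ'(t,i) + (β(t,i) − ρ_j + λ_{ii})·ḡ(t,i) + (1−γ)·g(t,i)^{1/(γ−1)}·ḡ(t,i) + λ_{ij}·g(t,j) = 0, with g(T,i) = ḡ(T,i) = 1, and suppose there is m > 0 with g(t,i) ≥ m and ḡ(t,i) ≥ 0 for all t, i. Put α(t,i) = ρ_i − β(t,i) − λ_{ii}, ᾱ(t,i) = ρ_j − β(t,i) − λ_{ii}, K = (1−γ)·m^{1/(γ−1)}, and for i ≠ j define B(t) = min(α(t,i), ᾱ(t,j)) − K − max(λ_{ij}, λ_{ji}). Then for each i ∈ {0,1}, j = 1−i, the function h(t) = g(t,i) + ḡ(t,j) satisfies h'(t) ≥ B(t)·h(t) on [0,T], and consequently g(t,i) + ḡ(t,j) ≤ 2·exp(−∫_t^T B(s) ds) for all t ∈ [0,T]; in particular g and ḡ are uniformly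 bounded above on [0,T] × {0,1}. -/

import Mathlib

/-!
For `j = 1 − i` add the `g`-equation in regime `i` to the `ḡ`-equation in regime `j`. Since the
exponent `1/(γ−1)` is negative, `g ≥ m` bounds the nonlinear terms by `(1−γ) g^{1/(γ−1)} ≤ K`, and
since `g, ḡ ≥ 0` the coupling terms `λ_{ij} ḡ(t,j)`, `λ_{ji} g(t,i)` are at most
`max(λ_{ij}, λ_{ji})·h` for `h = g(·,i) + ḡ(·,j)`. This gives `h' ≥ B h`, so
`h(t) e^{∫_t^T B}` is nondecreasing, and comparing with `h(T) = 2` gives the exponential bound.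
-/

/-- The coefficient `β(t,i) = γ r(t,i) + γ μ(t,i)²/(2σ(t,i)²(1−γ))`. -/
noncomputable def betaFn (γ : ℝ) (r μ σ : ℝ → Fin 2 → ℝ) : ℝ → Fin 2 → ℝ :=
  fun t i => γ * r t i + γ * (μ t i) ^ 2 / (2 * (σ t i) ^ 2 * (1 - γ))

open Set Real

lemma continuousOn_betaFn {γ : ℝ} {r μ σ : ℝ → Fin 2 → ℝ} {s : Set ℝ} {i : Fin 2} (hγ : γ ≠ 1)
    (hr : ContinuousOn (fun t => r t i) s) (hμ : ContinuousOn (fun t => μ t i) s)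
    (hσc : ContinuousOn (fun t => σ t i) s) (hσ : ∀ t ∈ s, σ t i ≠ 0) :
    ContinuousOn (fun t => betaFn γ r μ σ t i) s := by
  have hden : ∀ t ∈ s, 2 * σ t i ^ 2 * (1 - γ) ≠ 0 := fun t ht => by
    have := hσ t ht
    have : 1 - γ ≠ 0 := sub_ne_zero.mpr hγ.symm
    positivity
  exact (continuousOn_const.mul hr).add
    ((continuousOn_const.mul (hμ.pow 2)).div ((continuousOn_const.mul (hσc.pow 2)).mul
      continuousOn_const) hden)

lemma one_sub_mul_rpow_le {γ m x : ℝ} (hγ : γ < 1) (hm : 0 < m) (hx : m ≤ x) :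
    (1 - γ) * x ^ (1 / (γ - 1)) ≤ (1 - γ) * m ^ (1 / (γ - 1)) :=
  mul_le_mul_of_nonneg_left
    (rpow_le_rpow_of_nonpos hm hx (div_nonpos_of_nonneg_of_nonpos zero_le_one (by linarith)))
    (by linarith)

lemma rpow_div_sub_one {γ x : ℝ} (hγ : γ ≠ 1) (hx : 0 < x) :
    x ^ (γ / (γ - 1)) = x * x ^ (1 / (γ - 1)) := by
  have : γ - 1 ≠ 0 := sub_ne_zero.mpr hγ
  rw [show γ / (γ - 1) = 1 + 1 / (γ - 1) by field_simp; ring, rpow_add hx, rpow_one]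

lemma mul_sub_le_of_add_rpow_eq_zero {γ m x x' y a b l : ℝ} (hγ : γ < 1) (hm : 0 < m)
    (hx : m ≤ x) (h : x' + (b - a - l) * x + (1 - γ) * x ^ (γ / (γ - 1)) + l * y = 0) :
    (a - b + l) * x - (1 - γ) * m ^ (1 / (γ - 1)) * x - l * y ≤ x' := by
  have hK := mul_le_mul_of_nonneg_right (one_sub_mul_rpow_le hγ hm hx) (hm.le.trans hx)
  rw [rpow_div_sub_one hγ.ne (hm.trans_le hx)] at h
  nlinarith

lemma mul_sub_le_of_add_mul_rpow_eq_zero {γ m x y y' z a b l : ℝ} (hγ : γ < 1) (hm : 0 < m)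
    (hx : m ≤ x) (hy : 0 ≤ y)
    (h : y' + (b - a - l) * y + (1 - γ) * x ^ (1 / (γ - 1)) * y + l * z = 0) :
    (a - b + l) * y - (1 - γ) * m ^ (1 / (γ - 1)) * y - l * z ≤ y' := by
  have hK := mul_le_mul_of_nonneg_right (one_sub_mul_rpow_le hγ hm hx) hy
  nlinarith

lemma min_sub_sub_max_mul_add_le {p q K l l' x y x' y' : ℝ} (hx : 0 ≤ x) (hy : 0 ≤ y)
    (hx' : p * x - K * x - l * y ≤ x') (hy' : q * y - K * y - l' * x ≤ y') :
    (min p q - K - max l l') * (x + y) ≤ x' + y' := by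
  have := mul_le_mul_of_nonneg_right (min_le_left p q) hx
  have := mul_le_mul_of_nonneg_right (min_le_right p q) hy
  have := mul_le_mul_of_nonneg_right (le_max_left l l') hy
  have := mul_le_mul_of_nonneg_right (le_max_right l l') hx
  linarith

theorem le_mul_exp_neg_integral_of_mul_le_deriv {a b t : ℝ} {h h' B : ℝ → ℝ}
    (hB : ContinuousOn B (Icc a b))
    (hh : ∀ x ∈ Icc a b, HasDerivWithinAt h (h' x) (Icc a b) x)
    (hle : ∀ x ∈ Icc a b, B x * h x ≤ h' x) (ht : t ∈ Icc a b) :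
    h t ≤ h b * exp (-∫ s in t..b, B s) := by
  have hab : a ≤ b := ht.1.trans ht.2
  set E : ℝ → ℝ := fun x => ∫ s in x..b, B s
  have hEc : ContinuousOn E (Icc a b) := by
    rw [← uIcc_of_le hab] at hB ⊢
    exact intervalIntegral.continuousOn_primitive_interval_left
      (hB.integrableOn_compact isCompact_uIcc)
  have hE' : ∀ x ∈ Ioo a b, HasDerivAt E (-B x) x := fun x hx =>
    intervalIntegral.integral_hasDerivAt_left
      (hB.mono (uIcc_subset_Icc (Ioo_subset_Icc_self hx) ⟨hab, le_rfl⟩)).intervalIntegrable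
      ((hB.mono Ioo_subset_Icc_self).stronglyMeasurableAtFilter isOpen_Ioo x hx)
      (hB.continuousAt (Icc_mem_nhds hx.1 hx.2))
  have hmono : MonotoneOn (fun x => h x * exp (E x)) (Icc a b) := by
    refine monotoneOn_of_hasDerivWithinAt_nonneg (convex_Icc a b)
      (ContinuousOn.mul (fun x hx => (hh x hx).continuousWithinAt) hEc.rexp)
      (f' := fun x => (h' x - B x * h x) * exp (E x)) (fun x hx => ?_) (fun x hx => ?_)
    · rw [interior_Icc] at hx ⊢
      have hhx := (hh x (Ioo_subset_Icc_self hx)).mono Ioo_subset_Icc_self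
      exact (hhx.mul (hE' x hx).exp.hasDerivWithinAt).congr_deriv (by ring)
    · rw [interior_Icc] at hx
      exact mul_nonneg (sub_nonneg.mpr (hle x (Ioo_subset_Icc_self hx))) (exp_nonneg _)
  have hFt : h t * exp (E t) ≤ h b := by
    simpa [E] using hmono ht (right_mem_Icc.mpr hab) ht.2
  calc h t = h t * exp (E t) * exp (-E t) := by
        rw [mul_assoc, ← exp_add, add_neg_cancel, exp_zero, mul_one]
    _ ≤ h b * exp (-E t) := mul_le_mul_of_nonneg_right hFt (exp_nonneg _)

lemma exists_forall_le_of_continuousOn {ι α : Type*} [Finite ι] [TopologicalSpace α] {s : Set α}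
    (hs : IsCompact s) {F : ι → α → ℝ} (hF : ∀ i, ContinuousOn (F i) s) :
    ∃ M, ∀ i, ∀ t ∈ s, F i t ≤ M := by
  choose C hC using fun i => hs.bddAbove_image (hF i)
  obtain ⟨M, hM⟩ := (finite_range C).bddAbove
  exact ⟨M, fun i t ht => (hC i (mem_image_of_mem _ ht)).trans (hM (mem_range_self i))⟩

theorem stmt_14_general (T γ m : ℝ) (hγ : γ < 1) (hm : 0 < m)
    (r μ σ : ℝ → Fin 2 → ℝ)
    (hr : ∀ i, ContinuousOn (fun t => r t i) (Set.Icc 0 T))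
    (hμ : ∀ i, ContinuousOn (fun t => μ t i) (Set.Icc 0 T))
    (hσc : ∀ i, ContinuousOn (fun t => σ t i) (Set.Icc 0 T))
    (hσ : ∀ t i, 0 < σ t i)
    (ρ : Fin 2 → ℝ)
    (lam : Fin 2 → ℝ)
    (g gb g' gb' : ℝ → Fin 2 → ℝ)
    (hglb : ∀ i : Fin 2, ∀ t ∈ Set.Icc 0 T, m ≤ g t i)
    (hgblb : ∀ i : Fin 2, ∀ t ∈ Set.Icc 0 T, 0 ≤ gb t i)
    (hgdiff : ∀ i : Fin 2, ∀ t ∈ Set.Icc 0 T,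
      HasDerivWithinAt (fun s => g s i) (g' t i) (Set.Icc 0 T) t)
    (hgbdiff : ∀ i : Fin 2, ∀ t ∈ Set.Icc 0 T,
      HasDerivWithinAt (fun s => gb s i) (gb' t i) (Set.Icc 0 T) t)
    (heq1 : ∀ i : Fin 2, ∀ t ∈ Set.Icc 0 T,
      g' t i + (betaFn γ r μ σ t i - ρ i - lam i) * g t i
        + (1 - γ) * g t i ^ (γ / (γ - 1)) + lam i * gb t (1 - i) = 0)
    (heq2 : ∀ i : Fin 2, ∀ t ∈ Set.Icc 0 T,
      gb' t i + (betaFn γ r μ σ t i - ρ (1 - i) - lam i) * gb t i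
        + (1 - γ) * g t i ^ (1 / (γ - 1)) * gb t i + lam i * g t (1 - i) = 0)
    (hterm : ∀ i : Fin 2, g T i = 1 ∧ gb T i = 1) :
    let α : ℝ → Fin 2 → ℝ := fun t i => ρ i - betaFn γ r μ σ t i + lam i
    let αb : ℝ → Fin 2 → ℝ := fun t i => ρ (1 - i) - betaFn γ r μ σ t i + lam i
    let K : ℝ := (1 - γ) * m ^ (1 / (γ - 1))
    let B : ℝ → Fin 2 → ℝ := fun t i =>
      min (α t i) (αb t (1 - i)) - K - max (lam i) (lam (1 - i))
    (∀ i : Fin 2, ∀ t ∈ Set.Icc 0 T,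
      B t i * (g t i + gb t (1 - i)) ≤ g' t i + gb' t (1 - i)) ∧
    (∀ i : Fin 2, ∀ t ∈ Set.Icc 0 T,
      g t i + gb t (1 - i) ≤ 2 * Real.exp (-∫ s in t..T, B s i)) ∧
    ∃ M : ℝ, ∀ i : Fin 2, ∀ t ∈ Set.Icc 0 T, g t i ≤ M ∧ gb t i ≤ M := by
  intro α αb K B
  have hBc : ∀ i, ContinuousOn (fun t => B t i) (Icc 0 T) := fun i => by
    have hβ (j : Fin 2) : ContinuousOn (fun t => betaFn γ r μ σ t j) (Icc 0 T) :=
      continuousOn_betaFn hγ.ne (hr j) (hμ j) (hσc j) fun t _ => (hσ t j).ne'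
    exact ((((continuousOn_const.sub (hβ i)).add continuousOn_const).inf
      ((continuousOn_const.sub (hβ (1 - i))).add continuousOn_const)).sub
        continuousOn_const).sub continuousOn_const
  have hderiv : ∀ i, ∀ t ∈ Icc 0 T,
      B t i * (g t i + gb t (1 - i)) ≤ g' t i + gb' t (1 - i) := by
    intro i t ht
    have h₂ := heq2 (1 - i) t ht
    dsimp only [B, αb]
    rw [sub_sub_cancel] at h₂ ⊢
    exact min_sub_sub_max_mul_add_le (hm.le.trans (hglb i t ht)) (hgblb _ t ht)
      (mul_sub_le_of_add_rpow_eq_zero hγ hm (hglb i t ht) (heq1 i t ht))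
      (mul_sub_le_of_add_mul_rpow_eq_zero hγ hm (hglb _ t ht) (hgblb _ t ht) h₂)
  refine ⟨hderiv, fun i t ht => ?_, ?_⟩
  · have h := le_mul_exp_neg_integral_of_mul_le_deriv (hBc i)
      (fun x hx => (hgdiff i x hx).fun_add (hgbdiff (1 - i) x hx)) (hderiv i) ht
    rwa [(hterm i).1, (hterm (1 - i)).2, one_add_one_eq_two] at h
  · obtain ⟨M, hM⟩ := exists_forall_le_of_continuousOn isCompact_Icc
      (F := fun i t => max (g t i) (gb t i)) fun i =>
        ContinuousOn.sup (fun t ht => (hgdiff i t ht).continuousWithinAt)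
          (fun t ht => (hgbdiff i t ht).continuousWithinAt)
    exact ⟨M, fun i t ht => max_le_iff.mp (hM i t ht)⟩

/-- Upper bound for the subgame perfect ODE system (appendix, second step of the proof of
Lemma 4.1): if `(g, ḡ)` solves the system with terminal value `1`, `g ≥ m > 0` and
`ḡ ≥ 0`, then with `α(t,i) = ρ_i − β(t,i) − λ_{ii}`, `ᾱ(t,i) = ρ_j − β(t,i) − λ_{ii}`,
`K = (1−γ)m^{1/(γ−1)}` and `B(t) = min(α(t,i), ᾱ(t,j)) − K − max(λ_{ij}, λ_{ji})`
(for `j = 1 − i`, `λ_{ij} = lam i`, `λ_{ii} = −lam i`), the function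
`h(t) = g(t,i) + ḡ(t,j)` satisfies `h' ≥ B·h` on `[0,T]`, hence
`g(t,i) + ḡ(t,j) ≤ 2·exp(−∫_t^T B(s) ds)`; in particular `g, ḡ` are uniformly bounded
above on `[0,T] × {0,1}`. -/
theorem stmt_14 (T γ m : ℝ) (hT : 0 < T) (hγ : γ < 1) (hγ0 : γ ≠ 0) (hm : 0 < m)
    (r μ σ : ℝ → Fin 2 → ℝ)
    (hr : ∀ i, ContinuousOn (fun t => r t i) (Set.Icc 0 T))
    (hμ : ∀ i, ContinuousOn (fun t => μ t i) (Set.Icc 0 T))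
    (hσc : ∀ i, ContinuousOn (fun t => σ t i) (Set.Icc 0 T))
    (hσ : ∀ t i, 0 < σ t i)
    (ρ : Fin 2 → ℝ) (hρ : ∀ i, 0 < ρ i)
    (lam : Fin 2 → ℝ) (hlam : ∀ i, 0 ≤ lam i)
    (g gb g' gb' : ℝ → Fin 2 → ℝ)
    (hglb : ∀ i : Fin 2, ∀ t ∈ Set.Icc 0 T, m ≤ g t i)
    (hgblb : ∀ i : Fin 2, ∀ t ∈ Set.Icc 0 T, 0 ≤ gb t i)
    (hgdiff : ∀ i : Fin 2, ∀ t ∈ Set.Icc 0 T,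
      HasDerivWithinAt (fun s => g s i) (g' t i) (Set.Icc 0 T) t)
    (hgbdiff : ∀ i : Fin 2, ∀ t ∈ Set.Icc 0 T,
      HasDerivWithinAt (fun s => gb s i) (gb' t i) (Set.Icc 0 T) t)
    (hgcont : ∀ i : Fin 2, ContinuousOn (fun t => g' t i) (Set.Icc 0 T))
    (hgbcont : ∀ i : Fin 2, ContinuousOn (fun t => gb' t i) (Set.Icc 0 T))
    (heq1 : ∀ i : Fin 2, ∀ t ∈ Set.Icc 0 T,
      g' t i + (betaFn γ r μ σ t i - ρ i - lam i) * g t i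
        + (1 - γ) * g t i ^ (γ / (γ - 1)) + lam i * gb t (1 - i) = 0)
    (heq2 : ∀ i : Fin 2, ∀ t ∈ Set.Icc 0 T,
      gb' t i + (betaFn γ r μ σ t i - ρ (1 - i) - lam i) * gb t i
        + (1 - γ) * g t i ^ (1 / (γ - 1)) * gb t i + lam i * g t (1 - i) = 0)
    (hterm : ∀ i : Fin 2, g T i = 1 ∧ gb T i = 1) :
    let α : ℝ → Fin 2 → ℝ := fun t i => ρ i - betaFn γ r μ σ t i + lam i
    let αb : ℝ → Fin 2 → ℝ := fun t i => ρ (1 - i) - betaFn γ r μ σ t i + lam i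
    let K : ℝ := (1 - γ) * m ^ (1 / (γ - 1))
    let B : ℝ → Fin 2 → ℝ := fun t i =>
      min (α t i) (αb t (1 - i)) - K - max (lam i) (lam (1 - i))
    (∀ i : Fin 2, ∀ t ∈ Set.Icc 0 T,
      B t i * (g t i + gb t (1 - i)) ≤ g' t i + gb' t (1 - i)) ∧
    (∀ i : Fin 2, ∀ t ∈ Set.Icc 0 T,
      g t i + gb t (1 - i) ≤ 2 * Real.exp (-∫ s in t..T, B s i)) ∧
    ∃ M : ℝ, ∀ i : Fin 2, ∀ t ∈ Set.Icc 0 T, g t i ≤ M ∧ gb t i ≤ M :=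
  stmt_14_general T γ m hγ hm r μ σ hr hμ hσc hσ ρ lam g gb g' gb' hglb hgblb hgdiff hgbdiff heq1
    heq2 hterm
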